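/- arXiv:1312.6263 — 5 statements merged into one kernel-verified Lean document; each statement's English description precedes it below -/
import Mathlib

section
/- (Prime Filter Theorem) Let L be a distributive lattice, F a filter of L, and a ∈ L with a ∉ F. Then there exists a prime filter P of L such that F ⊆ P and a ∉ P. -/
/-- A filter of a lattice: a nonempty, upward-closed subset closed under binary meets. -/
def IsLatFilter {L : Type*} [Lattice L] (F : Set L) : Prop :=
  F.Nonempty ∧ (∀ a b : L, a ∈ F → a ≤ b → b ∈ F) ∧ (∀ a b : L, a ∈ F → b ∈ F → a ⊓ b ∈ F)

/-- A prime filter: a nonempty, proper, upward-closed subset closed under binary meets,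
such that `a ⊔ b ∈ F` implies `a ∈ F` or `b ∈ F`. -/
def IsPrimeLatFilter {L : Type*} [Lattice L] (F : Set L) : Prop :=
  IsLatFilter F ∧ F ≠ Set.univ ∧ (∀ a b : L, a ⊔ b ∈ F → a ∈ F ∨ b ∈ F)

/-- Prime Filter Theorem: In a distributive lattice, for any filter `F`
and any `a ∉ F` there is a prime filter `P` with `F ⊆ P` and `a ∉ P`. -/
theorem prime_filter_theorem {L : Type*} [DistribLattice L] (F : Set L)
    (hF : IsLatFilter F) (a : L) (ha : a ∉ F) :
    ∃ P : Set L, IsPrimeLatFilter P ∧ F ⊆ P ∧ a ∉ P := by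
  obtain ⟨P, -, hPmax⟩ :
      ∃ P, F ⊆ P ∧ Maximal (· ∈ {G : Set L | IsLatFilter G ∧ F ⊆ G ∧ a ∉ G}) P := by
    apply zorn_subset_nonempty {G : Set L | IsLatFilter G ∧ F ⊆ G ∧ a ∉ G} _ F ⟨hF, subset_rfl, ha⟩
    intro c hc hchain hcne
    refine ⟨⋃₀ c, ⟨⟨?_, ?_, ?_⟩, ?_, ?_⟩, fun G hG => Set.subset_sUnion_of_mem hG⟩
    · obtain ⟨G, hG⟩ := hcne
      obtain ⟨x, hx⟩ := (hc hG).1.1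
      exact ⟨x, G, hG, hx⟩
    · rintro x y ⟨G, hG, hx⟩ hxy
      exact ⟨G, hG, (hc hG).1.2.1 x y hx hxy⟩
    · rintro x y ⟨G, hG, hx⟩ ⟨H, hH, hy⟩
      rcases hchain.total hG hH with h | h
      · exact ⟨H, hH, (hc hH).1.2.2 x y (h hx) hy⟩
      · exact ⟨G, hG, (hc hG).1.2.2 x y hx (h hy)⟩
    · obtain ⟨G, hG⟩ := hcne
      exact (hc hG).2.1.trans (Set.subset_sUnion_of_mem hG)
    · rintro ⟨G, hG, haG⟩
      exact (hc hG).2.2 haG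
  obtain ⟨⟨hPfil, hFP, haP⟩, hPmax'⟩ := hPmax
  have hmax : ∀ G ∈ {G : Set L | IsLatFilter G ∧ F ⊆ G ∧ a ∉ G}, P ⊆ G → G = P :=
    fun G hG hsub => subset_antisymm (hPmax' hG hsub) hsub
  obtain ⟨hne, hup, hmeet⟩ := hPfil
  refine ⟨P, ⟨⟨hne, hup, hmeet⟩, ?_, ?_⟩, hFP, haP⟩
  · intro h; exact haP (h ▸ Set.mem_univ a)
  · intro x y hxy
    by_contra h
    push_neg at h
    obtain ⟨hx, hy⟩ := h
    -- filter generated by P and x contains a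
    have key : ∀ z : L, z ∉ P → z ⊔ y ⊔ x ∈ P ∨ True → ∃ p ∈ P, p ⊓ z ≤ a := by
      intro z hz _
      by_contra hcon
      push_neg at hcon
      have : {w : L | ∃ p ∈ P, p ⊓ z ≤ w} = P := by
        apply hmax
        · refine ⟨⟨⟨z, ?_⟩, ?_, ?_⟩, ?_, ?_⟩
          · obtain ⟨p, hp⟩ := hne
            exact ⟨p, hp, inf_le_right⟩
          · rintro u v ⟨p, hp, hle⟩ huv
            exact ⟨p, hp, hle.trans huv⟩
          · rintro u v ⟨p, hp, hpu⟩ ⟨q, hq, hqv⟩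
            exact ⟨p ⊓ q, hmeet p q hp hq, by
              calc p ⊓ q ⊓ z ≤ (p ⊓ z) ⊓ (q ⊓ z) := by
                    simp only [le_inf_iff]
                    exact ⟨⟨inf_le_left.trans inf_le_left, inf_le_right⟩,
                           ⟨inf_le_left.trans inf_le_right, inf_le_right⟩⟩
                _ ≤ u ⊓ v := inf_le_inf hpu hqv⟩
          · intro w hw
            obtain ⟨p, hp⟩ : ∃ p ∈ P, p ⊓ z ≤ w := ⟨w, hFP hw, inf_le_left⟩
            exact ⟨w, hFP hw, inf_le_left⟩
          · rintro ⟨p, hp, hle⟩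
            exact hcon p hp hle
        · intro p hp
          exact ⟨p, hp, inf_le_left⟩
      apply hz
      rw [← this]
      obtain ⟨p, hp⟩ := hne
      exact ⟨p, hp, inf_le_right⟩
    obtain ⟨p, hp, hpx⟩ := key x hx (Or.inr trivial)
    obtain ⟨q, hq, hqy⟩ := key y hy (Or.inr trivial)
    apply haP
    have hmem : p ⊓ q ⊓ (x ⊔ y) ∈ P := hmeet _ _ (hmeet p q hp hq) hxy
    refine hup _ a hmem ?_
    rw [inf_sup_left]
    apply sup_le
    · exact le_trans (inf_le_inf_right x (inf_le_left)) hpx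
    · exact le_trans (inf_le_inf_right y (inf_le_right)) hqy
end

section
/- Let L be a complete lattice that is spatial and satisfies the join-infinite distributive law (JID), and let J be its set of completely join-irreducible elements. Then the map Φ(x) = {j ∈ J | j ≤ x} is an order isomorphism from L onto the lattice (ordered by inclusion) of all subsets S of J that are downward closed within J (i.e., j ∈ S, k ∈ J, k ≤ j imply k ∈ S). -/
/-- An element of a complete lattice is completely join-irreducible if whenever it is
the supremum of a set, it belongs to that set. -/
def CompletelyJoinIrreducible {L : Type*} [CompleteLattice L] (j : L) : Prop :=
  ∀ S : Set L, j = sSup S → j ∈ S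

lemma cji_le_sSup {L : Type*} [CompleteLattice L] {j : L}
    (hJID : ∀ (x : L) (S : Set L), x ⊓ sSup S = ⨆ y ∈ S, x ⊓ y)
    (hj : CompletelyJoinIrreducible j) {S : Set L} (h : j ≤ sSup S) :
    ∃ y ∈ S, j ≤ y := by
  have h1 : j = sSup ((fun y => j ⊓ y) '' S) := by
    rw [sSup_image]
    rw [← hJID j S]
    exact (inf_eq_left.mpr h).symm
  obtain ⟨y, hyS, hy⟩ := hj _ h1
  exact ⟨y, hyS, hy ▸ inf_le_right⟩

/-- Let `L` be a complete spatial lattice satisfying (JID) and let `J` be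
its set of completely join-irreducible elements. Then `Φ x = {j ∈ J | j ≤ x}` is an
order isomorphism from `L` onto the lattice (ordered by inclusion) of subsets of `J`
that are downward closed within `J`. -/
theorem spatial_frame_orderIso_downsets {L : Type*} [CompleteLattice L]
    (hspatial : ∀ a : L, a = sSup {j : L | CompletelyJoinIrreducible j ∧ j ≤ a})
    (hJID : ∀ (x : L) (S : Set L), x ⊓ sSup S = ⨆ y ∈ S, x ⊓ y) :
    ∃ e : L ≃o {S : Set L // S ⊆ {j : L | CompletelyJoinIrreducible j} ∧
        ∀ j ∈ S, ∀ k : L, CompletelyJoinIrreducible k → k ≤ j → k ∈ S},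
      ∀ x : L, (e x : Set L) = {j : L | CompletelyJoinIrreducible j ∧ j ≤ x} := by
  refine ⟨{
    toFun := fun x => ⟨{j : L | CompletelyJoinIrreducible j ∧ j ≤ x},
      fun j hj => hj.1, fun j hj k hk hkj => ⟨hk, hkj.trans hj.2⟩⟩
    invFun := fun S => sSup (S : Set L)
    left_inv := fun x => (hspatial x).symm
    right_inv := fun S => by
      obtain ⟨S, hSJ, hdc⟩ := S
      ext j
      simp only [Set.mem_setOf_eq]
      constructor
      · rintro ⟨hj, hle⟩
        obtain ⟨y, hyS, hjy⟩ := cji_le_sSup hJID hj hle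
        exact hdc y hyS j hj hjy
      · intro hjS
        exact ⟨hSJ hjS, le_sSup hjS⟩
    map_rel_iff' := by
      intro x y
      simp only [Equiv.coe_fn_mk, Subtype.mk_le_mk]
      constructor
      · intro h
        calc x = sSup {j : L | CompletelyJoinIrreducible j ∧ j ≤ x} := hspatial x
          _ ≤ sSup {j : L | CompletelyJoinIrreducible j ∧ j ≤ y} := sSup_le_sSup h
          _ = y := (hspatial y).symm
      · intro h j hj
        exact ⟨hj.1, hj.2.trans h⟩ }, fun x => rfl⟩
end

section
/- Let L be a complete lattice that is spatial and satisfies the join-infinite distributive law (JID), equipped with a Galois connection (f, g). Let J be the set of completely join-irreducible elements of L, define R on J by j R k iff j ≤ f(k), and let Φ(x) = {j ∈ J | j ≤ x}. Then for all x ∈ L, Φ(f(x)) = {j ∈ J | ∃ k ∈ J, j R k and k ∈ Φ(x)} (i.e., Φ(f(x)) = Φ(x)^UP). -/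
/-- Let `L` be a complete spatial lattice satisfying (JID), with a Galois
connection `(f, g)`. With `Φ x = {j ∈ J | j ≤ x}` and `j R k ↔ j ≤ f k` on the set `J`
of completely join-irreducible elements, one has `Φ (f x) = (Φ x)^UP`. -/
theorem Phi_f_eq_upper {L : Type*} [CompleteLattice L]
    (hspatial : ∀ a : L, a = sSup {j : L | CompletelyJoinIrreducible j ∧ j ≤ a})
    (hJID : ∀ (x : L) (S : Set L), x ⊓ sSup S = ⨆ y ∈ S, x ⊓ y)
    (f g : L → L) (hgc : ∀ p q : L, f p ≤ q ↔ p ≤ g q) :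
    ∀ x : L,
      {j : L | CompletelyJoinIrreducible j ∧ j ≤ f x} =
        {j : L | CompletelyJoinIrreducible j ∧
          ∃ k : L, CompletelyJoinIrreducible k ∧ j ≤ f k ∧ k ≤ x} := by
  intro x
  have hmono : ∀ a b : L, a ≤ b → f a ≤ f b := by
    intro a b hab
    exact (hgc a (f b)).mpr (hab.trans ((hgc b (f b)).mp le_rfl))
  ext j
  simp only [Set.mem_setOf_eq]
  constructor
  · rintro ⟨hj, hjf⟩
    refine ⟨hj, ?_⟩
    set S : Set L := {k : L | CompletelyJoinIrreducible k ∧ k ≤ x} with hS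
    -- f preserves sSup
    have hf : f x = sSup (f '' S) := by
      apply le_antisymm
      · rw [hspatial x]
        exact (hgc _ _).mpr (sSup_le fun k hk =>
          (hgc k _).mp (le_sSup ⟨k, hk, rfl⟩))
      · exact sSup_le (by rintro _ ⟨k, hk, rfl⟩; exact hmono k x hk.2)
    have hj1 : j = j ⊓ sSup (f '' S) := by
      rw [← hf]; exact (inf_eq_left.mpr hjf).symm
    have hj2 : j = sSup ((fun y => j ⊓ y) '' (f '' S)) :=
      hj1.trans ((hJID j (f '' S)).trans (sSup_image).symm)
    have := hj _ hj2
    obtain ⟨_, ⟨k, hkS, rfl⟩, hjk⟩ := this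
    exact ⟨k, hkS.1, hjk ▸ inf_le_right, hkS.2⟩
  · rintro ⟨hj, k, hk, hjfk, hkx⟩
    exact ⟨hj, hjfk.trans (hmono k x hkx)⟩
end

section
/- (Representation of spatial HGC-algebras) Let L be a complete lattice that is spatial and satisfies the join-infinite distributive law (JID) (so L is a Heyting algebra), equipped with a Galois connection (f, g). Then there exist a set X, a preorder ≤ on X, and a relation R on X satisfying condition (CR), together with an order isomorphism Φ from L onto the lattice T_≤ of upper sets of (X, ≤) ordered by inclusion, such that for all x ∈ L, Φ(f(x)) = Φ(x)^UP and Φ(g(x)) = Φ(x)^Down. -/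
/-- Representation of spatial HGC-algebras: Let `L` be a complete spatial
lattice satisfying (JID) (hence a Heyting algebra), with a Galois connection `(f, g)`.
Then there are a set `X`, a preorder `le` on `X` and a relation `R` on `X` satisfying
condition (CR), together with an order isomorphism `Φ` of `L` onto the lattice of
`le`-upper sets of `X` ordered by inclusion, such that `Φ (f x) = (Φ x)^UP` and
`Φ (g x) = (Φ x)^Down` for all `x`. -/
theorem spatial_HGC_representation {L : Type u} [CompleteLattice L]
    (hspatial : ∀ a : L, a = sSup {j : L | CompletelyJoinIrreducible j ∧ j ≤ a})
    (hJID : ∀ (x : L) (S : Set L), x ⊓ sSup S = ⨆ y ∈ S, x ⊓ y)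
    (f g : L → L) (hgc : ∀ p q : L, f p ≤ q ↔ p ≤ g q) :
    ∃ (X : Type u) (le R : X → X → Prop),
      (∀ x : X, le x x) ∧
      (∀ x y z : X, le x y → le y z → le x z) ∧
      (∀ x x' y y' : X, le x x' → R x y → le y' y → R x' y') ∧
      ∃ Φ : L ≃o {A : Set X // ∀ a b : X, le a b → a ∈ A → b ∈ A},
        ∀ x : L,
          (Φ (f x) : Set X) = {a : X | ∃ b : X, R a b ∧ b ∈ (Φ x : Set X)} ∧
          (Φ (g x) : Set X) = {a : X | ∀ b : X, R b a → b ∈ (Φ x : Set X)} := by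
  classical
  have fmono : ∀ {p q : L}, p ≤ q → f p ≤ f q := by
    intro p q h
    exact (hgc _ _).2 (h.trans ((hgc q (f q)).1 le_rfl))
  have hprime : ∀ j : L, CompletelyJoinIrreducible j → ∀ S : Set L,
      j ≤ sSup S → ∃ s ∈ S, j ≤ s := by
    intro j hj S hle
    have h1 : j = sSup ((fun y => j ⊓ y) '' S) := by
      rw [sSup_image, ← hJID, inf_eq_left.mpr hle]
    obtain ⟨s, hs, he⟩ := hj _ h1
    exact ⟨s, hs, by rw [← he]; exact inf_le_right⟩
  have fsSup : ∀ S : Set L, f (sSup S) = sSup (f '' S) := by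
    intro S
    apply le_antisymm
    · refine (hgc _ _).2 (sSup_le fun s hs => (hgc _ _).1 (le_sSup ⟨s, hs, rfl⟩))
    · exact sSup_le (by rintro _ ⟨s, hs, rfl⟩; exact fmono (le_sSup hs))
  set X := {j : L // CompletelyJoinIrreducible j} with hX
  refine ⟨X, fun j k => k.val ≤ j.val, fun j k => j.val ≤ f k.val,
    fun j => le_rfl, fun x y z h1 h2 => h2.trans h1,
    fun x x' y y' h1 h2 h3 => h1.trans (h2.trans (fmono h3)), ?_⟩
  have hupper : ∀ a : L, ∀ p q : X, q.val ≤ p.val → p.val ≤ a → q.val ≤ a :=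
    fun a p q h1 h2 => h1.trans h2
  refine ⟨⟨⟨fun a => ⟨{j : X | j.val ≤ a}, fun p q h1 h2 => h1.trans h2⟩,
      fun A => sSup (Subtype.val '' A.val), ?_, ?_⟩, ?_⟩, ?_⟩
  · -- left inverse
    intro a
    have : Subtype.val '' {j : X | j.val ≤ a} =
        {j : L | CompletelyJoinIrreducible j ∧ j ≤ a} := by
      ext j; constructor
      · rintro ⟨⟨k, hk⟩, hle, rfl⟩; exact ⟨hk, hle⟩
      · rintro ⟨hj, hle⟩; exact ⟨⟨j, hj⟩, hle, rfl⟩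
    simp only [this, ← hspatial a]
  · -- right inverse
    rintro ⟨A, hA⟩
    ext j
    simp only [Set.mem_setOf_eq]
    constructor
    · intro hj
      obtain ⟨s, ⟨k, hk, rfl⟩, hle⟩ := hprime j.val j.prop _ hj
      exact hA k j hle hk
    · intro hj
      exact le_sSup ⟨j, hj, rfl⟩
  · -- map_rel_iff'
    intro a b
    constructor
    · intro h
      rw [hspatial a]
      refine sSup_le fun j hj => ?_
      exact h (show (⟨j, hj.1⟩ : X) ∈ {j : X | j.val ≤ a} from hj.2)
    · intro h j hj
      exact le_trans hj h
  · -- the two equations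
    intro x
    constructor
    · ext a
      simp only [Set.mem_setOf_eq]
      constructor
      · intro ha
        have hx : f x = sSup (f '' {j : L | CompletelyJoinIrreducible j ∧ j ≤ x}) := by
          rw [← fsSup, ← hspatial]
        rw [hx] at ha
        obtain ⟨s, ⟨k, ⟨hk, hkx⟩, rfl⟩, hle⟩ := hprime a.val a.prop _ ha
        exact ⟨⟨k, hk⟩, hle, hkx⟩
      · rintro ⟨b, hab, hbx⟩
        exact hab.trans (fmono hbx)
    · ext a
      simp only [Set.mem_setOf_eq]
      constructor
      · intro ha b hb
        exact (hb.trans (fmono ha)).trans ((hgc _ _).2 le_rfl)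
      · intro h
        refine (hgc _ _).1 ?_
        calc f a.val = sSup {j : L | CompletelyJoinIrreducible j ∧ j ≤ f a.val} :=
              hspatial _
          _ ≤ x := sSup_le fun j hj => h ⟨j, hj.1⟩ hj.2
end

section
/- (Representation of complete weakly atomic HBGC-algebras) Let L be a complete lattice satisfying both the join-infinite distributive law (JID) and the meet-infinite distributive law (MID) (so L is a Heyting–Brouwer algebra), which is weakly atomic, and equipped with a Galois connection (f, g). Then there exist a set X, a preorder ≤ on X, and a relation R on X satisfying condition (CR), together with an order isomorphism Φ from L onto the lattice T_≤ of upper sets of (X, ≤) ordered by inclusion, such that for all x ∈ L, Φ(f(x)) = Φ(x)^UP and Φ(g(x)) = Φ(x)^Down. -/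
/-- Representation of complete weakly atomic HBGC-algebras: Let `L` be a
complete lattice satisfying (JID) and (MID) (hence a Heyting–Brouwer algebra), which is
weakly atomic, with a Galois connection `(f, g)`. Then there are a set `X`, a preorder
`le` on `X` and a relation `R` on `X` satisfying condition (CR), together with an order
isomorphism `Φ` of `L` onto the lattice of `le`-upper sets of `X` ordered by inclusion,
such that `Φ (f x) = (Φ x)^UP` and `Φ (g x) = (Φ x)^Down` for all `x`. -/
theorem weaklyAtomic_HBGC_representation {L : Type u} [CompleteLattice L]
    (hJID : ∀ (x : L) (S : Set L), x ⊓ sSup S = ⨆ y ∈ S, x ⊓ y)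
    (hMID : ∀ (x : L) (S : Set L), x ⊔ sInf S = ⨅ y ∈ S, x ⊔ y)
    (hWA : ∀ x y : L, x < y → ∃ a b : L, x ≤ a ∧ a ⋖ b ∧ b ≤ y)
    (f g : L → L) (hgc : ∀ p q : L, f p ≤ q ↔ p ≤ g q) :
    ∃ (X : Type u) (le R : X → X → Prop),
      (∀ x : X, le x x) ∧
      (∀ x y z : X, le x y → le y z → le x z) ∧
      (∀ x x' y y' : X, le x x' → R x y → le y' y → R x' y') ∧
      ∃ Φ : L ≃o {A : Set X // ∀ a b : X, le a b → a ∈ A → b ∈ A},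
        ∀ x : L,
          (Φ (f x) : Set X) = {a : X | ∃ b : X, R a b ∧ b ∈ (Φ x : Set X)} ∧
          (Φ (g x) : Set X) = {a : X | ∀ b : X, R b a → b ∈ (Φ x : Set X)} := by
  classical
  -- `P j` : `j` is completely join-prime
  set P : L → Prop := fun j => ∀ S : Set L, j ≤ sSup S → ∃ s ∈ S, j ≤ s with hP
  have fmono : ∀ p q : L, p ≤ q → f p ≤ f q := by
    intro p q h
    exact (hgc p (f q)).2 (le_trans h ((hgc q (f q)).1 le_rfl))
  have fsup : ∀ S : Set L, f (sSup S) = sSup (f '' S) := by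
    intro S
    apply le_antisymm
    · exact (hgc _ _).2 (sSup_le fun s hs => (hgc s _).1 (le_sSup ⟨s, hs, rfl⟩))
    · refine sSup_le ?_
      rintro _ ⟨s, hs, rfl⟩
      exact fmono _ _ (le_sSup hs)
  -- key lemma: every element is the sup of the completely join-primes below it
  have key : ∀ a : L, a = sSup {j | P j ∧ j ≤ a} := by
    intro a
    have hba : sSup {j | P j ∧ j ≤ a} ≤ a := sSup_le fun j hj => hj.2
    rcases eq_or_lt_of_le hba with h | h
    · exact h.symm
    exfalso
    obtain ⟨c, d, hbc, hcd, hda⟩ := hWA _ _ h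
    set F : Set L := {x | d ≤ c ⊔ x} with hF
    set j := sInf F with hjdef
    have hjF : d ≤ c ⊔ j := by
      rw [hjdef, hMID c F]
      exact le_iInf₂ fun y hy => hy
    have hjd : j ≤ d := sInf_le (show d ≤ c ⊔ d from le_sup_right)
    have hjcd : c ⊔ j = d := le_antisymm (sup_le hcd.le hjd) hjF
    have hjP : P j := by
      intro S hS
      by_contra hcon
      push_neg at hcon
      have h1 : ∀ y ∈ S, j ⊓ y ≤ c := by
        intro y hy
        have hle2 : c ⊔ (j ⊓ y) ≤ d := by
          rw [← hjcd]; exact sup_le_sup_left inf_le_left _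
        rcases hcd.eq_or_eq le_sup_left hle2 with heq | heq
        · calc j ⊓ y ≤ c ⊔ (j ⊓ y) := le_sup_right
            _ = c := heq
        · exfalso
          have hmem : j ⊓ y ∈ F := by
            show d ≤ c ⊔ (j ⊓ y); rw [heq]
          have : j ≤ j ⊓ y := sInf_le hmem
          exact hcon y hy (le_trans this inf_le_right)
      have hjc : j ≤ c := by
        have : j ⊓ sSup S = j := inf_eq_left.2 hS
        calc j = j ⊓ sSup S := this.symm
          _ = ⨆ y ∈ S, j ⊓ y := hJID j S
          _ ≤ c := iSup₂_le h1
      have : d ≤ c := by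
        calc d = c ⊔ j := hjcd.symm
          _ ≤ c := sup_le le_rfl hjc
      exact absurd this hcd.lt.not_ge
    have hjmem : j ∈ {j | P j ∧ j ≤ a} := ⟨hjP, le_trans hjd hda⟩
    have hjc : j ≤ c := le_trans (le_sSup hjmem) hbc
    have : d ≤ c := by
      calc d = c ⊔ j := hjcd.symm
        _ ≤ c := sup_le le_rfl hjc
    exact absurd this hcd.lt.not_ge
  -- the frame
  refine ⟨{j : L // P j}, fun a b => (b : L) ≤ (a : L), fun a b => (a : L) ≤ f (b : L),
    fun x => le_rfl, fun x y z hxy hyz => le_trans hyz hxy,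
    fun x x' y y' h1 h2 h3 => le_trans h1 (le_trans h2 (fmono _ _ h3)), ?_⟩
  -- the order isomorphism
  have upper : ∀ a : L, ∀ p q : {j : L // P j}, (q : L) ≤ (p : L) →
      p ∈ {j : {j : L // P j} | (j : L) ≤ a} → q ∈ {j : {j : L // P j} | (j : L) ≤ a} :=
    fun a p q hqp hp => le_trans hqp hp
  have left_inv : ∀ a : L,
      sSup (Subtype.val '' {j : {j : L // P j} | (j : L) ≤ a}) = a := by
    intro a
    have himg : Subtype.val '' {j : {j : L // P j} | (j : L) ≤ a} = {j | P j ∧ j ≤ a} := by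
      ext x
      constructor
      · rintro ⟨⟨y, hy⟩, hmem, rfl⟩; exact ⟨hy, hmem⟩
      · rintro ⟨hx1, hx2⟩; exact ⟨⟨x, hx1⟩, hx2, rfl⟩
    rw [himg, ← key a]
  have right_inv : ∀ A : Set {j : L // P j},
      (∀ p q : {j : L // P j}, (q : L) ≤ (p : L) → p ∈ A → q ∈ A) →
      {j : {j : L // P j} | (j : L) ≤ sSup (Subtype.val '' A)} = A := by
    intro A hA
    ext j
    constructor
    · intro hj
      obtain ⟨x, ⟨k, hk, rfl⟩, hjk⟩ := j.2 _ hj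
      exact hA k j hjk hk
    · intro hj
      exact le_sSup ⟨j, hj, rfl⟩
  refine ⟨{ toFun := fun a => ⟨{j : {j : L // P j} | (j : L) ≤ a}, upper a⟩
            invFun := fun A => sSup (Subtype.val '' A.1)
            left_inv := fun a => left_inv a
            right_inv := fun A => Subtype.ext (right_inv A.1 A.2)
            map_rel_iff' := ?_ }, ?_⟩
  · intro a b
    constructor
    · intro h
      have h' : {j : {j : L // P j} | (j : L) ≤ a} ⊆ {j : {j : L // P j} | (j : L) ≤ b} := h
      calc a = sSup {j | P j ∧ j ≤ a} := key a
        _ ≤ b := sSup_le fun x hx => h' (show ((⟨x, hx.1⟩ : {j : L // P j}) : L) ≤ a from hx.2)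
    · intro h
      exact fun j hj => le_trans hj h
  · intro x
    constructor
    · ext j
      simp only [Set.mem_setOf_eq]
      constructor
      · intro hj
        have : f x = sSup (f '' {y | P y ∧ y ≤ x}) := by
          conv_lhs => rw [key x]
          exact fsup _
        rw [this] at hj
        obtain ⟨z, ⟨y, ⟨hy1, hy2⟩, rfl⟩, hjz⟩ := j.2 _ hj
        exact ⟨⟨y, hy1⟩, hjz, hy2⟩
      · rintro ⟨k, hjk, hkx⟩
        exact le_trans hjk (fmono _ _ hkx)
    · ext j
      simp only [Set.mem_setOf_eq]
      constructor
      · intro hj k hk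
        have : f (j : L) ≤ x := (hgc _ _).2 hj
        exact le_trans hk this
      · intro hall
        refine (hgc _ _).1 ?_
        have : f (j : L) = sSup {y | P y ∧ y ≤ f (j : L)} := key _
        rw [this]
        refine sSup_le fun y hy => ?_
        exact hall ⟨y, hy.1⟩ hy.2
end
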